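/- arXiv:1205.5523 — 2 statements merged into one kernel-verified Lean document; each statement's English description precedes it below -/
import Mathlib

section
/- If r = 3, n = 8 and B spans P^8, then χ(O_B) = 2λ - g + a - 17 and K_S² = -22λ + 12g + dΔ - 12a + 184, where S is a general surface section of B. -/
/-- Lemma `r=3 B nondegenerate`, first step: for `r = 3`, `n = 8`, `B` spanning `P^8`,
the Hilbert polynomial relations `P_B(1) = 9`, `P_B(2) = 36 - a`, the Noether relation
`c₂ = 12χ(O_S) - K_S² - K_S·H_S`, the Chern class relation of Proposition
`segre and chern classes` for `n = 8`, the sectional genus relation `K_S·H_S = 2g - 2 - λ`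
and `χ(O_S) = χ(O_B) - P_B(-1)` give `χ(O_B) = 2λ - g + a - 17` and
`K_S² = -22λ + 12g + dΔ - 12a + 184`.

Here `P_B(t) = λ·C(t+2,3) + (1-g)·C(t+1,2) + b·t + χ` is the Hilbert polynomial of the
threefold `B`, so `P_B(1) = λ + (1-g) + b + χ`, `P_B(2) = 4λ + 3(1-g) + 2b + χ`,
`P_B(-1) = -b + χ`. -/
theorem stmt_4 (lam g a d Delta b chiB chiS KS2 KSHS c2 : ℤ)
    (hP1 : lam + (1 - g) + b + chiB = 9)
    (hP2 : 4 * lam + 3 * (1 - g) + 2 * b + chiB = 36 - a)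
    (hNoether : c2 = 12 * chiS - KS2 - KSHS)
    (hc2 : 2 * c2 = -((8 ^ 2 - 5 * 8 + 2) * lam - 2 ^ 8 + (4 - 4 * g) * 8
      + 12 * g + 2 * d * Delta - 12))
    (hKSHS : KSHS = 2 * g - 2 - lam)
    (hchiS : chiS = chiB - (-b + chiB)) :
    chiB = 2 * lam - g + a - 17 ∧
    KS2 = -22 * lam + 12 * g + d * Delta - 12 * a + 184 := by constructor <;> nlinarith [hP1, hP2, hNoether, hc2, hKSHS, hchiS]
end

section
/- If r = 3, n = 8, B spans P^8 and φ is of type (2,d) with image degree Δ, then K_B³ = λ² + 23λ - 24g - (7d + 1)Δ - 4d + 36a - 226. -/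
/-- Lemma `double point formula`: for `r = 3`, `n = 8`, `B` spanning `P^8` and `φ`
of type `(2,d)` with image degree `Δ`, the double point formula
`2·deg Sec(B) = λ² - s₃ - 7s₂·H - 21s₁·H² - 35H³` with `deg Sec(B) = 2d - 1`,
the Segre–Chern relations, `χ(O_B) = 2λ - g + a - 17`, `χ(O_B(H)) = 9`, and the
`c₂·H`, `c₃` identities of Proposition `segre and chern classes` (for `n = 8`) give
`K_B³ = λ² + 23λ - 24g - (7d+1)Δ - 4d + 36a - 226`. -/
theorem stmt_7 (lam g a d Delta KB3 KBH2 KB2H chiB c2H c3 s1 s2 s3 : ℤ)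
    (hdp : 2 * (2 * d - 1) = lam ^ 2 - s3 - 7 * s2 - 21 * s1 - 35 * lam)
    (hs1 : s1 = KBH2)
    (hKBH2 : KBH2 = 2 * g - 2 - 2 * lam)
    (hs2 : s2 = KB2H - c2H)
    (hKB2H : KB2H - c2H = 3 * KBH2 - 2 * lam - 2 * c2H + 12 * (9 - chiB))
    (hs3 : s3 = KB3 + 48 * chiB - c3)
    (hchiB : chiB = 2 * lam - g + a - 17)
    (hc2H : 2 * c2H = -((8 ^ 2 - 5 * 8 + 2) * lam - 2 ^ 8 + (4 - 4 * g) * 8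
      + 12 * g + 2 * d * Delta - 12))
    (hc3 : 6 * c3 = (2 * 8 ^ 3 - 12 * 8 ^ 2 + 22 * 8 - 12) * lam + 9 * 2 ^ 8
      + 8 * (-3 * 2 ^ 8 + 18 * g + 6 * d * Delta - 18)
      + (6 - 6 * g) * 8 ^ 2 - 24 * g + (-6 * d - 6) * Delta + 24) :
    KB3 = lam ^ 2 + 23 * lam - 24 * g - (7 * d + 1) * Delta - 4 * d + 36 * a - 226 := by
  linarith
end
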